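/- Weak forcing depends only on the elementary type: if (A, ā) and (B, b̄) are elementarily equivalent (satisfy the same finitary formulas), then for any infinitary formula ψ, A ⊩* ψ(ā) if and only if B ⊩* ψ(b̄). -/

import Mathlib

open FirstOrder

universe u

namespace InfinitaryForcing

variable (L : FirstOrder.Language.{u, u})

/-- Infinitary formulas of `L_{∞,ω}`: set-indexed conjunctions and disjunctions,
finitary quantification, free variables among `Fin n`. -/
inductive InfForm : ℕ → Type (u + 1)
  | equal {n : ℕ} (t₁ t₂ : L.Term (Fin n)) : InfForm n
  | rel {n l : ℕ} (R : L.Relations l) (ts : Fin l → L.Term (Fin n)) : InfForm n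
  | not {n : ℕ} (φ : InfForm n) : InfForm n
  | disj {n : ℕ} {ι : Type u} (Φ : ι → InfForm n) : InfForm n
  | conj {n : ℕ} {ι : Type u} (Φ : ι → InfForm n) : InfForm n
  | ex {n : ℕ} (φ : InfForm (n + 1)) : InfForm n
  | all {n : ℕ} (φ : InfForm (n + 1)) : InfForm n

variable {L}

/-- Tarskian satisfaction for infinitary formulas. -/
def Realize : ∀ {n : ℕ}, InfForm L n → ∀ (M : Type u), L.Structure M → (Fin n → M) → Prop
  | _, .equal t₁ t₂, _M, S, v => letI := S; t₁.realize v = t₂.realize v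
  | _, .rel R ts, _M, S, v => letI := S; Language.Structure.RelMap R fun i => (ts i).realize v
  | _, .not φ, M, S, v => ¬ Realize φ M S v
  | _, .disj Φ, M, S, v => ∃ i, Realize (Φ i) M S v
  | _, .conj Φ, M, S, v => ∀ i, Realize (Φ i) M S v
  | _, .ex φ, M, S, v => ∃ b : M, Realize φ M S (Fin.snoc v b)
  | _, .all φ, M, S, v => ∀ b : M, Realize φ M S (Fin.snoc v b)

/-- Elementary embeddings, with the structures made explicit. -/
abbrev ElemEmb (M N : Type u) (SM : L.Structure M) (SN : L.Structure N) : Type u :=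
  @FirstOrder.Language.ElementaryEmbedding L M N SM SN

/-- The strong forcing relation `A ⊩ ψ(ā)`, where conditions are structures
ordered by elementary extension. -/
def Forces : ∀ {n : ℕ}, InfForm L n → ∀ (M : Type u), L.Structure M → (Fin n → M) → Prop
  | _, .equal t₁ t₂, _M, S, v => letI := S; t₁.realize v = t₂.realize v
  | _, .rel R ts, _M, S, v => letI := S; Language.Structure.RelMap R fun i => (ts i).realize v
  | _, .not φ, M, S, v =>
      ∀ (N : Type u) (SN : L.Structure N) (f : ElemEmb M N S SN),
        ¬ Forces φ N SN (fun i => f.toFun (v i))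
  | _, .disj Φ, M, S, v => ∃ i, Forces (Φ i) M S v
  | _, .conj Φ, M, S, v =>
      ∀ (N : Type u) (SN : L.Structure N) (f : ElemEmb M N S SN) (i : _),
        ∃ (P : Type u) (SP : L.Structure P) (g : ElemEmb N P SN SP),
          Forces (Φ i) P SP (fun k => g.toFun (f.toFun (v k)))
  | _, .ex φ, M, S, v => ∃ b : M, Forces φ M S (Fin.snoc v b)
  | _, .all φ, M, S, v =>
      ∀ (N : Type u) (SN : L.Structure N) (f : ElemEmb M N S SN) (b : N),
        ∃ (P : Type u) (SP : L.Structure P) (g : ElemEmb N P SN SP),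
          Forces φ P SP (Fin.snoc (fun k => g.toFun (f.toFun (v k))) (g.toFun b))

/-- `M` decides `ψ(v)` if it strongly forces `ψ(v)` or `¬ψ(v)`. -/
def Decides {n : ℕ} (ψ : InfForm L n) (M : Type u) (S : L.Structure M) (v : Fin n → M) : Prop :=
  Forces ψ M S v ∨ Forces ψ.not M S v

/-- The weak forcing relation `A ⊩* ψ := A ⊩ ¬¬ψ`. -/
def WForces {n : ℕ} (ψ : InfForm L n) (M : Type u) (S : L.Structure M) (v : Fin n → M) : Prop :=
  Forces ψ.not.not M S v

variable (L)

/-- Finitary (`L_{ω,ω}`) formulas among the infinitary ones. -/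
inductive InfForm.IsFinitary : ∀ {n : ℕ}, InfForm L n → Prop
  | equal {n} (t₁ t₂ : L.Term (Fin n)) : IsFinitary (.equal t₁ t₂)
  | rel {n l} (R : L.Relations l) (ts : Fin l → L.Term (Fin n)) : IsFinitary (.rel R ts)
  | not {n} {φ : InfForm L n} : IsFinitary φ → IsFinitary φ.not
  | disj {n} {ι : Type u} (_ : Finite ι) {Φ : ι → InfForm L n} :
      (∀ i, IsFinitary (Φ i)) → IsFinitary (.disj Φ)
  | conj {n} {ι : Type u} (_ : Finite ι) {Φ : ι → InfForm L n} :
      (∀ i, IsFinitary (Φ i)) → IsFinitary (.conj Φ)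
  | ex {n} {φ : InfForm L (n + 1)} : IsFinitary φ → IsFinitary φ.ex
  | all {n} {φ : InfForm L (n + 1)} : IsFinitary φ → IsFinitary φ.all

/-- Quantifier-free infinitary formulas. -/
inductive InfForm.IsQF : ∀ {n : ℕ}, InfForm L n → Prop
  | equal {n} (t₁ t₂ : L.Term (Fin n)) : IsQF (.equal t₁ t₂)
  | rel {n l} (R : L.Relations l) (ts : Fin l → L.Term (Fin n)) : IsQF (.rel R ts)
  | not {n} {φ : InfForm L n} : IsQF φ → IsQF φ.not
  | disj {n} {ι : Type u} {Φ : ι → InfForm L n} : (∀ i, IsQF (Φ i)) → IsQF (.disj Φ)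
  | conj {n} {ι : Type u} {Φ : ι → InfForm L n} : (∀ i, IsQF (Φ i)) → IsQF (.conj Φ)

/-- `L_{ω₁,ω}` formulas: all conjunctions and disjunctions are countable. -/
inductive InfForm.IsCtble : ∀ {n : ℕ}, InfForm L n → Prop
  | equal {n} (t₁ t₂ : L.Term (Fin n)) : IsCtble (.equal t₁ t₂)
  | rel {n l} (R : L.Relations l) (ts : Fin l → L.Term (Fin n)) : IsCtble (.rel R ts)
  | not {n} {φ : InfForm L n} : IsCtble φ → IsCtble φ.not
  | disj {n} {ι : Type u} (_ : Countable ι) {Φ : ι → InfForm L n} :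
      (∀ i, IsCtble (Φ i)) → IsCtble (.disj Φ)
  | conj {n} {ι : Type u} (_ : Countable ι) {Φ : ι → InfForm L n} :
      (∀ i, IsCtble (Φ i)) → IsCtble (.conj Φ)
  | ex {n} {φ : InfForm L (n + 1)} : IsCtble φ → IsCtble φ.ex
  | all {n} {φ : InfForm L (n + 1)} : IsCtble φ → IsCtble φ.all

/-- A fragment of `L_{∞,ω}`: a family of sets of formulas closed under negation
and subformulas. -/
structure IsFragment (𝔸 : ∀ n : ℕ, Set (InfForm L n)) : Prop where
  not_mem : ∀ {n} {φ : InfForm L n}, φ ∈ 𝔸 n → φ.not ∈ 𝔸 n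
  of_not : ∀ {n} {φ : InfForm L n}, φ.not ∈ 𝔸 n → φ ∈ 𝔸 n
  of_disj : ∀ {n} {ι : Type u} {Φ : ι → InfForm L n}, InfForm.disj Φ ∈ 𝔸 n → ∀ i, Φ i ∈ 𝔸 n
  of_conj : ∀ {n} {ι : Type u} {Φ : ι → InfForm L n}, InfForm.conj Φ ∈ 𝔸 n → ∀ i, Φ i ∈ 𝔸 n
  of_ex : ∀ {n} {φ : InfForm L (n + 1)}, φ.ex ∈ 𝔸 n → φ ∈ 𝔸 (n + 1)
  of_all : ∀ {n} {φ : InfForm L (n + 1)}, φ.all ∈ 𝔸 n → φ ∈ 𝔸 (n + 1)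

variable {L}

/-- `G` is `𝔸`-generic if it decides every instance of every formula of `𝔸`. -/
def IsGeneric (𝔸 : ∀ n : ℕ, Set (InfForm L n)) (G : Type u) (SG : L.Structure G) : Prop :=
  ∀ (n : ℕ) (ψ : InfForm L n), ψ ∈ 𝔸 n → ∀ v : Fin n → G, Decides ψ G SG v

variable (L)

mutual
  /-- Finitary `∃ₙ` formulas: `n` alternating blocks of quantifiers beginning
  with existentials, counting finite conjunctions/disjunctions as free. -/
  inductive IsEx : ℕ → ∀ {k : ℕ}, InfForm L k → Prop
    | equal {m k} (t₁ t₂ : L.Term (Fin k)) : IsEx m (.equal t₁ t₂)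
    | rel {m k l} (R : L.Relations l) (ts : Fin l → L.Term (Fin k)) : IsEx m (.rel R ts)
    | not {m k} {φ : InfForm L k} : IsAll m φ → IsEx m φ.not
    | disj {m k} {ι : Type u} (_ : Finite ι) {Φ : ι → InfForm L k} :
        (∀ i, IsEx m (Φ i)) → IsEx m (.disj Φ)
    | conj {m k} {ι : Type u} (_ : Finite ι) {Φ : ι → InfForm L k} :
        (∀ i, IsEx m (Φ i)) → IsEx m (.conj Φ)
    | ex {m k} {φ : InfForm L (k + 1)} : IsEx m φ → 1 ≤ m → IsEx m φ.ex
    | exStep {m k} {φ : InfForm L (k + 1)} : IsAll m φ → IsEx (m + 1) φ.ex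

  /-- Finitary `∀ₙ` formulas. -/
  inductive IsAll : ℕ → ∀ {k : ℕ}, InfForm L k → Prop
    | equal {m k} (t₁ t₂ : L.Term (Fin k)) : IsAll m (.equal t₁ t₂)
    | rel {m k l} (R : L.Relations l) (ts : Fin l → L.Term (Fin k)) : IsAll m (.rel R ts)
    | not {m k} {φ : InfForm L k} : IsEx m φ → IsAll m φ.not
    | disj {m k} {ι : Type u} (_ : Finite ι) {Φ : ι → InfForm L k} :
        (∀ i, IsAll m (Φ i)) → IsAll m (.disj Φ)
    | conj {m k} {ι : Type u} (_ : Finite ι) {Φ : ι → InfForm L k} :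
        (∀ i, IsAll m (Φ i)) → IsAll m (.conj Φ)
    | all {m k} {φ : InfForm L (k + 1)} : IsAll m φ → 1 ≤ m → IsAll m φ.all
    | allStep {m k} {φ : InfForm L (k + 1)} : IsEx m φ → IsAll (m + 1) φ.all
end

/-- `f : A → B` is an `n`-elementary map (`A ⪯ₙ B` when `f` is an inclusion):
every finitary `∃ₙ` or `∀ₙ` formula transfers along `f`. -/
def IsNElemMap (n : ℕ) {A B : Type u} (SA : L.Structure A) (SB : L.Structure B)
    (f : A → B) : Prop :=
  ∀ (k : ℕ) (φ : InfForm L k), (IsEx L n φ ∨ IsAll L n φ) →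
    ∀ v : Fin k → A, Realize φ A SA v ↔ Realize φ B SB (fun i => f (v i))

/-- `f : A → B` is an elementary map: every finitary formula transfers along `f`. -/
def IsElemMap {A B : Type u} (SA : L.Structure A) (SB : L.Structure B)
    (f : A → B) : Prop :=
  ∀ (k : ℕ) (φ : InfForm L k), InfForm.IsFinitary L φ →
    ∀ v : Fin k → A, Realize φ A SA v ↔ Realize φ B SB (fun i => f (v i))

/-!
Naming the parameters by constants turns `(A, ā)` and `(B, b̄)` into elementarily equivalent
`L[[Fin n]]`-structures. These have a common elementary extension `C` by compactness: the
existential closure of a finite part of the elementary diagram of `A` is a sentence true in `A`,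
hence in `B`, so the two elementary diagrams are jointly satisfiable. In `C` the tuples `ā` and
`b̄` coincide. Weak forcing is invariant under an elementary extension `A ≼ C`: `A ⊩* ψ` says that
every extension of `A` has a further extension forcing `ψ`, and every extension of `A` can be
amalgamated with `C` over `A`. Hence `A ⊩* ψ(ā) ↔ C ⊩* ψ(ā) = C ⊩* ψ(b̄) ↔ B ⊩* ψ(b̄)`.
-/

end InfinitaryForcing

universe v w

namespace FirstOrder.Language

variable {L : Language.{u, v}}

def ElementaryEmbedding.reduct {L' : Language} (ϕ : L →ᴸ L') {M N : Type*}
    [L.Structure M] [L.Structure N] [L'.Structure M] [L'.Structure N]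
    [ϕ.IsExpansionOn M] [ϕ.IsExpansionOn N] (f : M ↪ₑ[L'] N) : M ↪ₑ[L] N where
  toFun := f
  map_formula' _ φ x := by
    simpa only [LHom.realize_onFormula] using f.map_formula (ϕ.onFormula φ) x

def ElementaryEmbedding.ofIsEmpty {M N : Type*} [L.Structure M] [L.Structure N] [IsEmpty M]
    (h : M ≅[L] N) : M ↪ₑ[L] N where
  toFun := isEmptyElim
  map_formula' := by
    intro k φ x
    cases k with
    | zero =>
      have hφ := elementarilyEquivalent_iff.mp h (φ.relabel finZeroElim)
      simp only [Sentence.Realize, Formula.realize_relabel] at hφ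
      rw [Unique.eq_default x, Unique.eq_default (isEmptyElim ∘ default)]
      convert hφ.symm
    | succ k => exact isEmptyElim (x 0)

namespace ElementarilyEquivalent

variable {M N : Type*} [L.Structure M] [L.Structure N]

theorem exists_realize_of_subset_elementaryDiagram [Nonempty N] (h : M ≅[L] N)
    {F : Finset L[[M]].Sentence} (hF : ↑F ⊆ L.elementaryDiagram M) :
    ∃ v : M → N, letI := constantsOn.structure v; ∀ ψ ∈ F, N ⊨ ψ := by
  classical
  let σ : L[[M]].Sentence := BoundedFormula.iInf fun ψ : F => ψ.1
  have hσM : M ⊨ σ := by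
    simp only [σ, Sentence.Realize, Formula.Realize, BoundedFormula.realize_iInf, Subtype.forall]
    exact hF
  let φ : L.Formula M := Formula.equivSentence.symm σ
  have hφσ : Formula.equivSentence φ = σ := Formula.equivSentence.apply_symm_apply σ
  have hφM : φ.exClosure.Realize M :=
    Formula.realize_exClosure_of_realize_equivSentence (hφσ ▸ hσM)
  obtain ⟨v, hv⟩ := Formula.exists_realize_equivSentence_iff_realize_exClosure.mpr
    ((elementarilyEquivalent_iff.mp h _).mp hφM)
  refine ⟨v, ?_⟩
  simpa only [hφσ, σ, Sentence.Realize, Formula.Realize, BoundedFormula.realize_iInf,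
    Subtype.forall] using hv

theorem isSatisfiable_union_elementaryDiagram [Nonempty M] (h : M ≅[L] N) :
    ((L.lhomWithConstantsMap (Sum.inl : M → M ⊕ N)).onTheory (L.elementaryDiagram M) ∪
      (L.lhomWithConstantsMap (Sum.inr : N → M ⊕ N)).onTheory
        (L.elementaryDiagram N)).IsSatisfiable := by
  classical
  have : Nonempty N := h.nonempty
  set ιM := L.lhomWithConstantsMap (Sum.inl : M → M ⊕ N)
  set ιN := L.lhomWithConstantsMap (Sum.inr : N → M ⊕ N)
  rw [Theory.isSatisfiable_iff_isFinitelySatisfiable]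
  intro T0 hT0
  obtain ⟨F, hFM, hF⟩ := Finset.subset_set_image_iff.mp
    (show ((T0.filter (· ∈ ιM.onTheory (L.elementaryDiagram M)) : Finset _) :
        Set L[[M ⊕ N]].Sentence) ⊆ ιM.onSentence '' L.elementaryDiagram M from
      fun φ hφ => (Finset.mem_filter.mp hφ).2)
  obtain ⟨v, hv⟩ := h.exists_realize_of_subset_elementaryDiagram hFM
  let : (constantsOn M).Structure N := constantsOn.structure v
  let : (constantsOn (M ⊕ N)).Structure N := constantsOn.structure (Sum.elim v id)
  have : (LHom.constantsOnMap (Sum.inl : M → M ⊕ N)).IsExpansionOn N :=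
    constantsOnMap_isExpansionOn rfl
  have : (LHom.constantsOnMap (Sum.inr : N → M ⊕ N)).IsExpansionOn N :=
    constantsOnMap_isExpansionOn rfl
  have : ιM.IsExpansionOn N := LHom.sumMap_isExpansionOn _ _ N
  have : ιN.IsExpansionOn N := LHom.sumMap_isExpansionOn _ _ N
  have : N ⊨ (T0 : L[[M ⊕ N]].Theory) := by
    refine (Theory.model_iff _).mpr fun θ hθ => ?_
    by_cases hθM : θ ∈ ιM.onTheory (L.elementaryDiagram M)
    · obtain ⟨ψ, hψ, rfl⟩ := Finset.mem_image.mp (hF ▸ Finset.mem_filter.mpr ⟨hθ, hθM⟩)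
      exact (LHom.realize_onSentence N ιM ψ).mpr (hv ψ hψ)
    · obtain ⟨ψ, hψ, rfl⟩ := (hT0 hθ).resolve_left hθM
      exact (LHom.realize_onSentence N ιN ψ).mpr hψ
  exact Theory.Model.isSatisfiable N

theorem exists_common_elementaryExtension {M N : Type (max u v)} [L.Structure M]
    [L.Structure N] (h : M ≅[L] N) :
    ∃ (P : Type (max u v)) (_ : L.Structure P), Nonempty (M ↪ₑ[L] P) ∧ Nonempty (N ↪ₑ[L] P) := by
  rcases isEmpty_or_nonempty M with hM | hM
  · exact ⟨N, inferInstance, ⟨.ofIsEmpty h⟩, ⟨.refl L N⟩⟩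
  obtain ⟨P⟩ := h.isSatisfiable_union_elementaryDiagram
  let ιM := L.lhomWithConstantsMap (Sum.inl : M → M ⊕ N)
  let ιN := L.lhomWithConstantsMap (Sum.inr : N → M ⊕ N)
  let : L[[M ⊕ N]].Structure P := P.struc
  let : L.Structure P := (L.lhomWithConstants (M ⊕ N)).reduct P
  let : L[[M]].Structure P := ιM.reduct P
  let : L[[N]].Structure P := ιN.reduct P
  have : (L.lhomWithConstants M).IsExpansionOn P := ⟨fun _ _ => rfl, fun _ _ => rfl⟩
  have : (L.lhomWithConstants N).IsExpansionOn P := ⟨fun _ _ => rfl, fun _ _ => rfl⟩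
  have : P ⊨ L.elementaryDiagram M :=
    (ιM.onTheory_model _).mp (P.is_model.mono Set.subset_union_left)
  have : P ⊨ L.elementaryDiagram N :=
    (ιN.onTheory_model _).mp (P.is_model.mono Set.subset_union_right)
  exact ⟨P, _, ⟨.ofModelsElementaryDiagram L M P⟩, ⟨.ofModelsElementaryDiagram L N P⟩⟩

end ElementarilyEquivalent

theorem exists_elementaryEmbeddings_comp_eq {α : Type w} {A B : Type (max u v w)}
    [L.Structure A] [L.Structure B] {a : α → A} {b : α → B}
    (h : ∀ φ : L.Formula α, φ.Realize a ↔ φ.Realize b) :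
    ∃ (C : Type (max u v w)) (_ : L.Structure C) (f : A ↪ₑ[L] C) (g : B ↪ₑ[L] C),
      f ∘ a = g ∘ b := by
  let : (constantsOn α).Structure A := constantsOn.structure a
  let : (constantsOn α).Structure B := constantsOn.structure b
  have hAB : A ≅[L[[α]]] B := elementarilyEquivalent_iff.mpr fun σ => by
    rw [← Formula.realize_equivSentence_symm_con, ← Formula.realize_equivSentence_symm_con]
    exact h _
  obtain ⟨C, _, ⟨f⟩, ⟨g⟩⟩ := hAB.exists_common_elementaryExtension
  let : L.Structure C := (L.lhomWithConstants α).reduct C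
  refine ⟨C, _, f.reduct (L.lhomWithConstants α), g.reduct (L.lhomWithConstants α),
    funext fun i => ?_⟩
  show f (L.con i) = g (L.con i)
  rw [f.map_constants, g.map_constants]

end FirstOrder.Language

namespace InfinitaryForcing

open FirstOrder.Language

variable {L : FirstOrder.Language.{u, u}}

namespace InfForm

def falsum {n : ℕ} : InfForm L n :=
  .disj (ι := PEmpty) PEmpty.elim

def or {n : ℕ} (φ ψ : InfForm L n) : InfForm L n :=
  .disj fun i : ULift Bool => bif i.down then ψ else φ

/-- The bound variables `Fin k` of a first-order formula become the free variables of an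
infinitary one; first-order formulas with free variables are reached through `relabel Sum.inr`. -/
def ofBoundedFormula : ∀ {k : ℕ}, L.BoundedFormula Empty k → InfForm L k
  | _, .falsum => falsum
  | _, .equal t₁ t₂ =>
    .equal (t₁.relabel (Sum.elim isEmptyElim id)) (t₂.relabel (Sum.elim isEmptyElim id))
  | _, .rel R ts => .rel R fun i => (ts i).relabel (Sum.elim isEmptyElim id)
  | _, .imp φ ψ => (ofBoundedFormula φ).not.or (ofBoundedFormula ψ)
  | _, .all φ => .all (ofBoundedFormula φ)

theorem isFinitary_ofBoundedFormula : ∀ {k : ℕ} (φ : L.BoundedFormula Empty k),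
    (ofBoundedFormula φ).IsFinitary L
  | _, .falsum => .disj inferInstance PEmpty.rec
  | _, .equal _ _ => .equal _ _
  | _, .rel _ _ => .rel _ _
  | _, .imp φ ψ => .disj inferInstance fun
      | ⟨false⟩ => (isFinitary_ofBoundedFormula φ).not
      | ⟨true⟩ => isFinitary_ofBoundedFormula ψ
  | _, .all φ => (isFinitary_ofBoundedFormula φ).all

end InfForm

theorem realize_or {n : ℕ} (φ ψ : InfForm L n) {M : Type u} [S : L.Structure M]
    (v : Fin n → M) : Realize (φ.or ψ) M S v ↔ Realize φ M S v ∨ Realize ψ M S v := by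
  simp [InfForm.or, Realize]

theorem realize_ofBoundedFormula {M : Type u} [S : L.Structure M] :
    ∀ {k : ℕ} (φ : L.BoundedFormula Empty k) (v : Fin k → M),
      Realize (InfForm.ofBoundedFormula φ) M S v ↔ φ.Realize default v
  | _, .falsum, v => by
    simp [InfForm.ofBoundedFormula, InfForm.falsum, Realize, BoundedFormula.Realize]
  | _, .equal t₁ t₂, v => by
    simp only [InfForm.ofBoundedFormula, Realize, BoundedFormula.Realize, Term.realize_relabel,
      Sum.comp_elim, Subsingleton.elim (v ∘ isEmptyElim) default, Function.comp_id]
  | _, .rel R ts, v => by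
    simp only [InfForm.ofBoundedFormula, Realize, BoundedFormula.Realize, Term.realize_relabel,
      Sum.comp_elim, Subsingleton.elim (v ∘ isEmptyElim) default, Function.comp_id]
  | _, .imp φ ψ, v => by
    simp only [InfForm.ofBoundedFormula, realize_or, Realize, realize_ofBoundedFormula φ,
      realize_ofBoundedFormula ψ, BoundedFormula.realize_imp, imp_iff_not_or]
  | _, .all φ, v => by
    simp only [InfForm.ofBoundedFormula, Realize, realize_ofBoundedFormula φ,
      BoundedFormula.realize_all]

theorem realize_formula_iff_of_isFinitary {n : ℕ} {A B : Type u} [SA : L.Structure A]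
    [SB : L.Structure B] {a : Fin n → A} {b : Fin n → B}
    (h : ∀ φ : InfForm L n, InfForm.IsFinitary L φ → (Realize φ A SA a ↔ Realize φ B SB b))
    (φ : L.Formula (Fin n)) : φ.Realize a ↔ φ.Realize b := by
  have := h _ (InfForm.isFinitary_ofBoundedFormula (BoundedFormula.relabel Sum.inr φ))
  rwa [realize_ofBoundedFormula, realize_ofBoundedFormula, Formula.realize_relabel_sumInr,
    Formula.realize_relabel_sumInr] at this

theorem wForces_iff {n : ℕ} (ψ : InfForm L n) (M : Type u) (S : L.Structure M) (v : Fin n → M) :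
    WForces ψ M S v ↔ ∀ (N : Type u) (SN : L.Structure N) (f : ElemEmb M N S SN),
      ∃ (P : Type u) (SP : L.Structure P) (g : ElemEmb N P SN SP),
        Forces ψ P SP fun i => g (f (v i)) := by
  simp only [WForces, Forces, not_forall, not_not]
  rfl

theorem wForces_map_iff {n : ℕ} (ψ : InfForm L n) {A C : Type u} [SA : L.Structure A]
    [SC : L.Structure C] (f : A ↪ₑ[L] C) (a : Fin n → A) :
    WForces ψ C SC (f ∘ a) ↔ WForces ψ A SA a := by
  simp only [wForces_iff]
  constructor
  · intro hC N SN g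
    obtain ⟨D, SD, k, l, hkl⟩ := exists_elementaryEmbeddings_comp_eq (a := f) (b := g)
      fun φ => (f.map_formula φ id).trans (g.map_formula φ id).symm
    obtain ⟨P, SP, m, hm⟩ := hC D SD k
    refine ⟨P, SP, m.comp l, ?_⟩
    convert hm using 2 with i
    exact congrArg m (congrFun hkl (a i)).symm
  · intro hA N SN g
    exact hA N SN (g.comp f)

/-- Weak forcing depends only on the elementary type of the parameters: if `(A, ā)`
and `(B, b̄)` satisfy the same finitary formulas, then for any infinitary `ψ`,
`A ⊩* ψ(ā)` iff `B ⊩* ψ(b̄)`. -/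
theorem stmt16 {L : FirstOrder.Language.{u, u}} {n : ℕ}
    {A B : Type u} (SA : L.Structure A) (SB : L.Structure B)
    (a : Fin n → A) (b : Fin n → B)
    (h : ∀ φ : InfForm L n, InfForm.IsFinitary L φ →
      (Realize φ A SA a ↔ Realize φ B SB b))
    (ψ : InfForm L n) :
    WForces ψ A SA a ↔ WForces ψ B SB b := by
  obtain ⟨C, SC, f, g, hfg⟩ :=
    exists_elementaryEmbeddings_comp_eq (realize_formula_iff_of_isFinitary h)
  rw [← wForces_map_iff ψ f a, ← wForces_map_iff ψ g b, hfg]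

end InfinitaryForcing
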